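/- arXiv:1111.3465 — 6 statements merged into one kernel-verified Lean document; each statement's English description precedes it below -/
import Mathlib

section
/- Let γ ∈ (1,2] and let κ_a(λ,μ) be as above. Then for all a, c, λ, μ ∈ (0,∞): c^{1/(γ-1)} κ_a(c^{-γ/(γ-1)} λ, c^{-1/(γ-1)} μ) = κ_{a/c}(λ, μ). -/
/-!
The equation `κ' = λ - κ ^ γ` is invariant under `κ ↦ c ^ (1/(γ-1)) κ (c ·)`,
`λ ↦ c ^ (γ/(γ-1)) λ`, because `1/(γ-1) + 1 = γ/(γ-1)`. Since `x ↦ λ - x ^ γ` is `C¹` for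
`γ ≥ 1`, hence locally Lipschitz, solutions with a given initial value are unique, so the
rescaled solution coincides with `κ (·) λ μ`.
-/

open Real Set

theorem ODE_solution_unique_of_locallyLipschitz {E : Type*} [NormedAddCommGroup E]
    [NormedSpace ℝ E] {v : E → E} (hv : LocallyLipschitz v) {f g : ℝ → E} {a b : ℝ}
    (hf : ∀ t ∈ Icc a b, HasDerivAt f (v (f t)) t)
    (hg : ∀ t ∈ Icc a b, HasDerivAt g (v (g t)) t) (ha : f a = g a) :
    EqOn f g (Icc a b) := by
  have hfc : ContinuousOn f (Icc a b) := HasDerivAt.continuousOn hf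
  have hgc : ContinuousOn g (Icc a b) := HasDerivAt.continuousOn hg
  set s := f '' Icc a b ∪ g '' Icc a b
  have hs : IsCompact s := (isCompact_Icc.image_of_continuousOn hfc).union
    (isCompact_Icc.image_of_continuousOn hgc)
  obtain ⟨K, hK⟩ := hv.locallyLipschitzOn.exists_lipschitzOnWith_of_compact hs
  exact ODE_solution_unique_of_mem_Icc_right (s := fun _ => s) (fun _ _ => hK)
    hfc (fun t ht => (hf t (Ico_subset_Icc_self ht)).hasDerivWithinAt)
    (fun t ht => Or.inl (mem_image_of_mem f (Ico_subset_Icc_self ht)))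
    hgc (fun t ht => (hg t (Ico_subset_Icc_self ht)).hasDerivWithinAt)
    (fun t ht => Or.inr (mem_image_of_mem g (Ico_subset_Icc_self ht))) ha

theorem locallyLipschitz_const_sub_rpow {γ : ℝ} (hγ : 1 ≤ γ) (lam : ℝ) :
    LocallyLipschitz fun x : ℝ => lam - x ^ γ :=
  (contDiff_const.sub (contDiff_rpow_const_of_le (n := 1) (by exact_mod_cast hγ))).locallyLipschitz

theorem hasDerivAt_rpow_mul_comp_mul {γ c lam t : ℝ} (hγ : γ ≠ 1) (hc : 0 < c) {φ : ℝ → ℝ}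
    (hφ : HasDerivAt φ (c ^ (-(γ / (γ - 1))) * lam - φ (c * t) ^ γ) (c * t))
    (hφ_nonneg : 0 ≤ φ (c * t)) :
    HasDerivAt (fun s => c ^ (1 / (γ - 1)) * φ (c * s))
      (lam - (c ^ (1 / (γ - 1)) * φ (c * t)) ^ γ) t := by
  have hγ1 : γ - 1 ≠ 0 := sub_ne_zero.mpr hγ
  have hexp : 1 / (γ - 1) + 1 = γ * (1 / (γ - 1)) := by field_simp; ring
  have hscale : c ^ (1 / (γ - 1)) * c = c ^ (γ * (1 / (γ - 1))) := by
    rw [← hexp, rpow_add hc, rpow_one]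
  have hlam : c ^ (γ * (1 / (γ - 1))) * c ^ (-(γ / (γ - 1))) = 1 := by
    rw [← rpow_add hc, mul_one_div, add_neg_cancel, rpow_zero]
  have hpow : (c ^ (1 / (γ - 1)) * φ (c * t)) ^ γ = c ^ (γ * (1 / (γ - 1))) * φ (c * t) ^ γ := by
    rw [mul_rpow (rpow_nonneg hc.le _) hφ_nonneg, ← rpow_mul hc.le, mul_comm (1 / (γ - 1))]
  have hderiv : HasDerivAt (fun s => c ^ (1 / (γ - 1)) * φ (c * s))
      (c ^ (1 / (γ - 1)) * ((c ^ (-(γ / (γ - 1))) * lam - φ (c * t) ^ γ) * c)) t :=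
    (hφ.comp t (by simpa using (hasDerivAt_id t).const_mul c)).const_mul _
  refine hderiv.congr_deriv ?_
  rw [hpow]
  linear_combination (c ^ (-(γ / (γ - 1))) * lam - φ (c * t) ^ γ) * hscale + lam * hlam

theorem stmt_3_general
    (γ : ℝ) (hγ : 1 < γ)
    (κ : ℝ → ℝ → ℝ → ℝ)
    (hinit : ∀ lam μ : ℝ, 0 ≤ lam → 0 ≤ μ → κ 0 lam μ = μ)
    (hnonneg : ∀ a lam μ : ℝ, 0 ≤ a → 0 ≤ lam → 0 ≤ μ → 0 ≤ κ a lam μ)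
    (hode : ∀ lam μ : ℝ, 0 ≤ lam → 0 ≤ μ → ∀ a : ℝ, 0 ≤ a →
      HasDerivAt (fun t => κ t lam μ) (lam - κ a lam μ ^ γ) a) :
    ∀ a c lam μ : ℝ, 0 < a → 0 < c → 0 < lam → 0 < μ →
      c ^ (1 / (γ - 1)) *
        κ a (c ^ (-(γ / (γ - 1))) * lam) (c ^ (-(1 / (γ - 1))) * μ)
      = κ (a / c) lam μ := by
  intro a c lam μ ha hc hlam hμ
  set lam' := c ^ (-(γ / (γ - 1))) * lam
  set μ' := c ^ (-(1 / (γ - 1))) * μ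
  have hlam' : 0 ≤ lam' := by positivity
  have hμ' : 0 ≤ μ' := by positivity
  have hrescaled : EqOn (fun t => c ^ (1 / (γ - 1)) * κ (c * t) lam' μ') (fun t => κ t lam μ)
      (Icc 0 (a / c)) := by
    refine ODE_solution_unique_of_locallyLipschitz (locallyLipschitz_const_sub_rpow hγ.le lam)
      (fun t ht => ?_) (fun t ht => hode lam μ hlam.le hμ.le t ht.1) ?_
    · have hct : 0 ≤ c * t := mul_nonneg hc.le ht.1
      exact hasDerivAt_rpow_mul_comp_mul hγ.ne' hc (hode lam' μ' hlam' hμ' _ hct)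
        (hnonneg _ _ _ hct hlam' hμ')
    · simp only [mul_zero, hinit lam' μ' hlam' hμ', hinit lam μ hlam.le hμ.le, μ', ← mul_assoc,
        ← rpow_add hc, add_neg_cancel, rpow_zero, one_mul]
  simpa [mul_div_cancel₀ a hc.ne'] using hrescaled ⟨by positivity, le_rfl⟩

theorem stmt_3
    (γ : ℝ) (hγ : 1 < γ) (hγ2 : γ ≤ 2)
    (κ : ℝ → ℝ → ℝ → ℝ)
    (hinit : ∀ lam μ : ℝ, 0 ≤ lam → 0 ≤ μ → κ 0 lam μ = μ)
    (hnonneg : ∀ a lam μ : ℝ, 0 ≤ a → 0 ≤ lam → 0 ≤ μ → 0 ≤ κ a lam μ)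
    (hode : ∀ lam μ : ℝ, 0 ≤ lam → 0 ≤ μ → ∀ a : ℝ, 0 ≤ a →
      HasDerivAt (fun t => κ t lam μ) (lam - κ a lam μ ^ γ) a) :
    ∀ a c lam μ : ℝ, 0 < a → 0 < c → 0 < lam → 0 < μ →
      c ^ (1 / (γ - 1)) *
        κ a (c ^ (-(γ / (γ - 1))) * lam) (c ^ (-(1 / (γ - 1))) * μ)
      = κ (a / c) lam μ :=
  stmt_3_general γ hγ κ hinit hnonneg hode
end

section
/- For every x > 0, x·tanh(x) = Σ_{n≥0} 2x² / (x² + (π²/4)(2n+1)²). -/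
/-!
Evaluating the partial-fraction expansion of the cotangent at the imaginary point `t / π * I`
gives `t coth t = 1 + ∑_{m ≥ 1} 2t² / (t² + π² m²)`. Since `x tanh x = 2x coth 2x - x coth x`, and
the expansion of `2x coth 2x` is `1 + ∑_{m ≥ 1} 2x² / (x² + π² (m/2)²)`, the terms with `m` even
cancel against `x coth x`, leaving the terms with `m` odd.
-/

open Real

theorem HasSum.even_of_odd {G : Type*} [AddCommGroup G] [UniformSpace G] [IsUniformAddGroup G]
    [CompleteSpace G] [T2Space G] {f : ℕ → G} {a b : G} (hf : HasSum f a)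
    (hodd : HasSum (fun k ↦ f (2 * k + 1)) b) : HasSum (fun k ↦ f (2 * k)) (a - b) := by
  obtain ⟨e, he⟩ := hf.summable.comp_injective (mul_right_injective₀ (two_ne_zero' ℕ))
  rwa [hf.unique (he.even_add_odd hodd), add_sub_cancel_right]

theorem Real.mul_tanh_eq_two_mul_div_tanh_two_mul_sub_div_tanh (x : ℝ) :
    x * tanh x = 2 * x / tanh (2 * x) - x / tanh x := by
  rw [tanh_eq_sinh_div_cosh, tanh_eq_sinh_div_cosh, sinh_two_mul, cosh_two_mul]
  rcases eq_or_ne (sinh x) 0 with h | h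
  · simp [h]
  have hc := (cosh_pos x).ne'
  field_simp
  ring

theorem Real.hasSum_div_tanh {t : ℝ} (ht : t ≠ 0) :
    HasSum (fun n : ℕ ↦ 2 * t ^ 2 / (t ^ 2 + π ^ 2 * (n + 1) ^ 2)) (t / tanh t - 1) := by
  set z : ℂ := t / π * Complex.I
  have hz : z ∈ Complex.integerComplement := by
    rintro ⟨n, hn⟩
    have := congrArg Complex.im hn
    simp [z] at this
    exact div_ne_zero ht pi_ne_zero this.symm
  have hz2 : z ^ 2 = -(t ^ 2 / π ^ 2) := by
    simp only [z, mul_pow, Complex.I_sq, div_pow]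
    ring
  have hπz : π * z = t * Complex.I := by
    simp only [z]
    field_simp
  -- Multiplying by `z` makes every term of the expansion, and its sum, real.
  have h := ((summable_cotTerm hz).hasSum_iff.mpr (cot_series_rep' hz).symm).mul_left z
  have hsum : (fun n : ℕ ↦ z * cotTerm z n) =
      fun n : ℕ ↦ ((2 * t ^ 2 / (t ^ 2 + π ^ 2 * (n + 1) ^ 2) : ℝ) : ℂ) := by
    funext n
    rw [cotTerm_identity hz,
      show z * (2 * z * (1 / ((z + (n + 1)) * (z - (n + 1))))) =
        -(2 * -z ^ 2) / -(-z ^ 2 + (n + 1) ^ 2) by ring, hz2, neg_neg, neg_div_neg_eq]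
    push_cast
    field_simp
  have hval : z * (π * Complex.cot (π * z) - 1 / z) = ((t / tanh t - 1 : ℝ) : ℂ) := by
    have hs : (sinh t : ℂ) ≠ 0 := Complex.ofReal_ne_zero.mpr (Real.sinh_ne_zero.mpr ht)
    rw [mul_sub, mul_one_div_cancel (Complex.integerComplement.ne_zero hz), ← mul_assoc,
      mul_comm z, hπz, Complex.cot_eq_cos_div_sin, Complex.cos_mul_I, Complex.sin_mul_I,
      tanh_eq_sinh_div_cosh]
    push_cast
    field_simp
  rw [hsum, hval] at h
  exact Complex.hasSum_ofReal.mp h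

theorem stmt_5 (x : ℝ) (hx : 0 < x) :
    x * Real.tanh x =
      ∑' n : ℕ, 2 * x ^ 2 / (x ^ 2 + (π ^ 2 / 4) * (2 * n + 1) ^ 2) := by
  have h2x := hasSum_div_tanh (mul_ne_zero two_ne_zero hx.ne')
  have heven := h2x.even_of_odd <| (hasSum_div_tanh hx.ne').congr_fun fun k ↦ by
    push_cast
    field_simp
    ring
  rw [sub_sub_sub_cancel_right, ← mul_tanh_eq_two_mul_div_tanh_two_mul_sub_div_tanh] at heven
  rw [← heven.tsum_eq]
  refine tsum_congr fun k ↦ ?_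
  push_cast
  field_simp
  ring
end

section
/- For every x > 0, x·coth(x) = 1 + Σ_{n≥1} 2x² / (x² + π²n²). -/
/-! At `z = x i / π` we have `π z cot (π z) = x coth x` and `2 z² / (z² - n²) = 2 x² / (x² + π² n²)`,
so the expansion is `z` times the Mittag-Leffler series of `π cot (π z)`. -/

open Real Complex

theorem Complex.hasSum_pi_mul_mul_cot_sub_one {z : ℂ} (hz : z ∈ integerComplement) :
    HasSum (fun n : ℕ => 2 * z ^ 2 / (z ^ 2 - (n + 1) ^ 2)) (π * z * cot (π * z) - 1) := by
  have hz0 := integerComplement.ne_zero hz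
  rw [show (π : ℂ) * z * cot (π * z) - 1 = z * (π * cot (π * z) - 1 / z) by field_simp,
    cot_series_rep' hz]
  refine ((summable_cotTerm hz).hasSum.mul_left z).congr_fun fun n => ?_
  have h₁ := integerComplement_add_ne_zero hz (n + 1)
  have h₂ := integerComplement_add_ne_zero hz (-(n + 1))
  push_cast at h₁ h₂
  rw [← sub_eq_add_neg] at h₂
  rw [cotTerm, div_eq_iff (by rw [sq_sub_sq]; exact mul_ne_zero h₁ h₂)]
  field_simp
  ring

theorem Complex.ofReal_mul_I_mem_integerComplement {x : ℝ} (hx : x ≠ 0) :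
    (x * I : ℂ) ∈ integerComplement := by
  rintro ⟨n, hn⟩
  exact hx (by simpa using congrArg Complex.im hn.symm)

theorem Real.hasSum_mul_coth_sub_one {x : ℝ} (hx : x ≠ 0) :
    HasSum (fun n : ℕ => 2 * x ^ 2 / (x ^ 2 + π ^ 2 * (n + 1) ^ 2))
      (x * (cosh x / sinh x) - 1) := by
  have hz := Complex.ofReal_mul_I_mem_integerComplement (div_ne_zero hx pi_ne_zero)
  have h := Complex.hasSum_pi_mul_mul_cot_sub_one hz
  have hcoth : (π : ℂ) * ((x / π : ℝ) * I) * Complex.cot (π * ((x / π : ℝ) * I)) =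
      x * (Complex.cosh x / Complex.sinh x) := by
    rw [show (π : ℂ) * ((x / π : ℝ) * I) = x * I by push_cast; field_simp,
      Complex.cot_eq_cos_div_sin, cos_mul_I, sin_mul_I]
    field_simp
  rw [hcoth] at h
  rw [← Complex.hasSum_ofReal]
  push_cast
  refine h.congr_fun fun n => ?_
  have hd : (x : ℂ) ^ 2 + π ^ 2 * (n + 1) ^ 2 ≠ 0 := by
    exact_mod_cast (by positivity : (0 : ℝ) < x ^ 2 + π ^ 2 * (n + 1) ^ 2).ne'
  have hn := integerComplement_pow_two_ne_pow_two hz (n + 1)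
  push_cast at hn ⊢
  rw [div_eq_div_iff hd (sub_ne_zero.mpr hn), mul_pow, div_pow, I_sq]
  field_simp
  ring

theorem stmt_6 (x : ℝ) (hx : 0 < x) :
    x * (Real.cosh x / Real.sinh x) =
      1 + ∑' n : ℕ, 2 * x ^ 2 / (x ^ 2 + π ^ 2 * (n + 1) ^ 2) := by
  rw [(Real.hasSum_mul_coth_sub_one hx.ne').tsum_eq]
  ring
end

section
/- Fix c ≥ 0. For every λ > 0, (1/λ)·(1 − √λ(coth(√λ) − tanh((1+c)√λ))) = (2/(1+c)) Σ_{n≥0} 1/(λ + (π(2n+1)/(2(1+c)))²) − 2 Σ_{n≥1} 1/(λ + π²n²). -/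
/-!
Both series are partial-fraction expansions. Euler's expansion
`π cot (π z) - 1 / z = ∑ (1 / (z - n) + 1 / (z + n))`, evaluated at the imaginary point
`z = i t / π`, becomes `coth t - 1 / t = ∑ 2 t / (t² + π² n²)`.
Since `tanh y = 2 coth 2y - coth y`, subtracting the coth series at `y` from twice the one
at `2y` cancels the even-indexed terms and leaves `tanh y = ∑ 2 y / (y² + (π (2n+1) / 2)²)`.
With `t = √λ` and `y = (1 + c) √λ` the identity is then a matter of algebra.
-/

open Real

namespace Complex

lemma I_mul_div_pi_mem_integerComplement {t : ℝ} (ht : t ≠ 0) :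
    I * t / π ∈ integerComplement := by
  rintro ⟨n, hn⟩
  have := congrArg im hn
  simp only [intCast_im, div_ofReal_im, mul_im, I_re, I_im, ofReal_re, ofReal_im] at this
  exact div_ne_zero ht Real.pi_ne_zero (by simpa using this.symm)

lemma cotTerm_I_mul_div_pi {t : ℝ} (ht : t ≠ 0) (n : ℕ) :
    cotTerm (I * t / π) n = -I * π * ((2 * t / (t ^ 2 + π ^ 2 * (n + 1) ^ 2) : ℝ) : ℂ) := by
  have hπ : (π : ℂ) ≠ 0 := ofReal_ne_zero.mpr Real.pi_ne_zero
  have hprod : (I * t / π + (n + 1)) * (I * t / π - (n + 1))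
      = -((t : ℂ) ^ 2 + π ^ 2 * (n + 1) ^ 2) / π ^ 2 := by
    field_simp
    ring_nf
    simp only [I_sq]
    ring
  rw [cotTerm_identity (I_mul_div_pi_mem_integerComplement ht) n, hprod]
  push_cast
  field_simp

lemma pi_mul_cot_sub_inv_I_mul_div_pi {t : ℝ} (ht : t ≠ 0) :
    π * cot (π * (I * t / π)) - 1 / (I * t / π)
      = -I * π * ((Real.cosh t / Real.sinh t - 1 / t : ℝ) : ℂ) := by
  have hπ : (π : ℂ) ≠ 0 := ofReal_ne_zero.mpr Real.pi_ne_zero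
  have hs : (Real.sinh t : ℂ) ≠ 0 := ofReal_ne_zero.mpr (by simpa using ht)
  have ht' : (t : ℂ) ≠ 0 := ofReal_ne_zero.mpr ht
  rw [mul_div_cancel₀ _ hπ, mul_comm I, cot_eq_cos_div_sin, cos_mul_I, sin_mul_I]
  push_cast
  field_simp
  ring_nf
  simp only [I_sq]
  ring

end Complex

namespace Real

theorem hasSum_cosh_div_sinh_sub_inv {t : ℝ} (ht : t ≠ 0) :
    HasSum (fun n : ℕ => 2 * t / (t ^ 2 + π ^ 2 * (n + 1) ^ 2)) (cosh t / sinh t - 1 / t) := by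
  have hx := Complex.I_mul_div_pi_mem_integerComplement ht
  have hsum := (summable_cotTerm hx).hasSum
  rw [← cot_series_rep' hx, Complex.pi_mul_cot_sub_inv_I_mul_div_pi ht] at hsum
  simp only [Complex.cotTerm_I_mul_div_pi ht] at hsum
  have hc : -Complex.I * π ≠ 0 := by simp [Real.pi_ne_zero]
  exact Complex.hasSum_ofReal.mp ((hasSum_mul_left_iff hc).mp hsum)

theorem hasSum_tanh {y : ℝ} (hy : y ≠ 0) :
    HasSum (fun n : ℕ => 2 * y / (y ^ 2 + (π * (2 * n + 1) / 2) ^ 2)) (tanh y) := by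
  set F : ℕ → ℝ := fun m => 2 * y / (y ^ 2 + (π * (m + 1) / 2) ^ 2) with hF
  have hfull : HasSum F (2 * (cosh (2 * y) / sinh (2 * y) - 1 / (2 * y))) := by
    refine ((hasSum_cosh_div_sinh_sub_inv (mul_ne_zero two_ne_zero hy)).mul_left 2).congr_fun
      fun m => ?_
    simp only [hF]
    field_simp
  have hcoth : HasSum (fun k => F (2 * k + 1)) (cosh y / sinh y - 1 / y) := by
    refine (hasSum_cosh_div_sinh_sub_inv hy).congr_fun fun k => ?_
    simp only [hF]
    push_cast
    ring_nf
  have htanh : Summable (fun k => F (2 * k)) :=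
    hfull.summable.comp_injective (mul_right_injective₀ two_ne_zero)
  have htsum := tsum_even_add_odd htanh hcoth.summable
  rw [hfull.tsum_eq, hcoth.tsum_eq] at htsum
  have hval :
      tanh y = 2 * (cosh (2 * y) / sinh (2 * y) - 1 / (2 * y)) - (cosh y / sinh y - 1 / y) := by
    have hs : sinh y ≠ 0 := by simpa using hy
    have hc : cosh y ≠ 0 := (cosh_pos y).ne'
    rw [cosh_two_mul, sinh_two_mul, tanh_eq_sinh_div_cosh]
    field_simp
    ring
  rw [hval, ← htsum, add_sub_cancel_right]
  refine htanh.hasSum.congr_fun fun k => ?_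
  simp only [hF]
  push_cast
  ring_nf

end Real

theorem stmt_7 (c : ℝ) (hc : 0 ≤ c) (lam : ℝ) (hlam : 0 < lam) :
    (1 / lam) * (1 - Real.sqrt lam *
        (Real.cosh (Real.sqrt lam) / Real.sinh (Real.sqrt lam) -
          Real.tanh ((1 + c) * Real.sqrt lam))) =
      (2 / (1 + c)) * ∑' n : ℕ, 1 / (lam + (π * (2 * n + 1) / (2 * (1 + c))) ^ 2)
        - 2 * ∑' n : ℕ, 1 / (lam + π ^ 2 * (n + 1) ^ 2) := by
  obtain ⟨x, hx, rfl⟩ : ∃ x : ℝ, 0 < x ∧ x ^ 2 = lam :=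
    ⟨√lam, sqrt_pos.mpr hlam, sq_sqrt hlam.le⟩
  rw [sqrt_sq hx.le]
  have ha : 0 < 1 + c := by linarith
  have htanh : ∑' n : ℕ, 1 / (x ^ 2 + (π * (2 * n + 1) / (2 * (1 + c))) ^ 2)
      = (1 + c) / (2 * x) * tanh ((1 + c) * x) := by
    rw [← ((hasSum_tanh (mul_pos ha hx).ne').mul_left _).tsum_eq]
    refine tsum_congr fun n => ?_
    field_simp
  have hcoth : ∑' n : ℕ, 1 / (x ^ 2 + π ^ 2 * (n + 1) ^ 2)
      = 1 / (2 * x) * (cosh x / sinh x - 1 / x) := by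
    rw [← ((hasSum_cosh_div_sinh_sub_inv hx.ne').mul_left _).tsum_eq]
    refine tsum_congr fun n => ?_
    field_simp
  rw [htanh, hcoth]
  field_simp
  ring
end

section
/- Define F(y) = Σ_{n≥0} 4·(2/(π²(2n+1)²) + y)·exp(−(π²/4)(2n+1)²y) for y > 0. Then F(y) ~ 4y·exp(−π²y/4) as y → ∞, i.e. F(y)/(4y·exp(−π²y/4)) → 1. -/
open Real Filter

theorem stmt_10 :
    Tendsto (fun y : ℝ =>
        (∑' n : ℕ, 4 * (2 / (π ^ 2 * (2 * n + 1) ^ 2) + y) *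
          Real.exp (-((π ^ 2 / 4) * (2 * n + 1) ^ 2 * y)))
        / (4 * y * Real.exp (-(π ^ 2 * y / 4))))
      atTop (nhds 1) := by
  have hπ : (0:ℝ) < π ^ 2 := by positivity
  -- limit of lower bound
  have hlow : Tendsto (fun y : ℝ => (2 / π ^ 2 + y) / y) atTop (nhds 1) := by
    have h1 : Tendsto (fun y : ℝ => 2 / π ^ 2 / y + 1) atTop (nhds (0 + 1)) :=
      (tendsto_const_nhds.div_atTop tendsto_id).add tendsto_const_nhds
    rw [zero_add] at h1
    apply h1.congr'
    filter_upwards [eventually_gt_atTop (0:ℝ)] with y hy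
    field_simp
  have hq : Tendsto (fun y : ℝ => Real.exp (-(2 * π ^ 2 * y))) atTop (nhds 0) := by
    apply Real.tendsto_exp_atBot.comp
    apply tendsto_neg_atBot_iff.mpr
    exact Tendsto.const_mul_atTop (by positivity) tendsto_id
  have hinv : Tendsto (fun y : ℝ => (1 - Real.exp (-(2 * π ^ 2 * y)))⁻¹) atTop (nhds 1) := by
    have h2 := (tendsto_const_nhds.sub hq).inv₀ (by norm_num : (1:ℝ) - 0 ≠ 0)
    simpa using h2
  have hup : Tendsto (fun y : ℝ => (2 / π ^ 2 + y) / y *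
      (1 - Real.exp (-(2 * π ^ 2 * y)))⁻¹) atTop (nhds 1) := by
    simpa using hlow.mul hinv
  -- the key per-term facts, for y > 0
  have key : ∀ y : ℝ, 0 < y →
      (∀ n : ℕ, 4 * (2 / (π ^ 2 * (2 * (n:ℝ) + 1) ^ 2) + y) *
        Real.exp (-((π ^ 2 / 4) * (2 * (n:ℝ) + 1) ^ 2 * y)) ≤
        4 * (2 / π ^ 2 + y) * Real.exp (-(π ^ 2 * y / 4)) *
          Real.exp (-(2 * π ^ 2 * y)) ^ n) := by
    intro y hy n
    have hn : (0:ℝ) ≤ (n:ℝ) := Nat.cast_nonneg n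
    have h1 : (1:ℝ) ≤ (2 * (n:ℝ) + 1) ^ 2 := by nlinarith
    have hc : 2 / (π ^ 2 * (2 * (n:ℝ) + 1) ^ 2) ≤ 2 / π ^ 2 := by
      apply div_le_div_of_nonneg_left (by norm_num) hπ
      nlinarith
    have hn2 : (n:ℝ) ≤ (n:ℝ) ^ 2 := by exact_mod_cast Nat.le_self_pow two_ne_zero n
    have he : -((π ^ 2 / 4) * (2 * (n:ℝ) + 1) ^ 2 * y) ≤
        -(π ^ 2 * y / 4) + (n:ℝ) * -(2 * π ^ 2 * y) := by
      nlinarith [mul_le_mul_of_nonneg_left hn2 (mul_nonneg hπ.le hy.le)]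
    calc 4 * (2 / (π ^ 2 * (2 * (n:ℝ) + 1) ^ 2) + y) *
          Real.exp (-((π ^ 2 / 4) * (2 * (n:ℝ) + 1) ^ 2 * y))
        ≤ 4 * (2 / π ^ 2 + y) * Real.exp (-(π ^ 2 * y / 4) + (n:ℝ) * -(2 * π ^ 2 * y)) := by
          apply mul_le_mul (by nlinarith) (Real.exp_le_exp.mpr he) (Real.exp_nonneg _)
            (by positivity)
      _ = 4 * (2 / π ^ 2 + y) * Real.exp (-(π ^ 2 * y / 4)) *
          Real.exp (-(2 * π ^ 2 * y)) ^ n := by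
          rw [Real.exp_add, Real.exp_nat_mul]; ring
  apply tendsto_of_tendsto_of_tendsto_of_le_of_le' hlow hup
  · -- lower bound
    filter_upwards [eventually_gt_atTop (0:ℝ)] with y hy
    have hD : 0 < 4 * y * Real.exp (-(π ^ 2 * y / 4)) := by positivity
    have hqlt : Real.exp (-(2 * π ^ 2 * y)) < 1 := Real.exp_lt_one_iff.mpr (by nlinarith)
    have hq0 : (0:ℝ) ≤ Real.exp (-(2 * π ^ 2 * y)) := Real.exp_nonneg _
    have hsumg : Summable (fun n : ℕ => 4 * (2 / π ^ 2 + y) * Real.exp (-(π ^ 2 * y / 4)) *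
        Real.exp (-(2 * π ^ 2 * y)) ^ n) :=
      (summable_geometric_of_lt_one hq0 hqlt).mul_left _
    have hsum : Summable (fun n : ℕ => 4 * (2 / (π ^ 2 * (2 * (n:ℝ) + 1) ^ 2) + y) *
        Real.exp (-((π ^ 2 / 4) * (2 * (n:ℝ) + 1) ^ 2 * y))) :=
      Summable.of_nonneg_of_le (fun n => by positivity) (key y hy) hsumg
    rw [le_div_iff₀ hD]
    calc (2 / π ^ 2 + y) / y * (4 * y * Real.exp (-(π ^ 2 * y / 4)))
        = 4 * (2 / (π ^ 2 * (2 * ((0:ℕ):ℝ) + 1) ^ 2) + y) *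
          Real.exp (-((π ^ 2 / 4) * (2 * ((0:ℕ):ℝ) + 1) ^ 2 * y)) := by
          push_cast
          rw [show -(π ^ 2 / 4 * (2 * (0:ℝ) + 1) ^ 2 * y) = -(π ^ 2 * y / 4) by ring]
          field_simp
          ring
      _ ≤ _ := Summable.le_tsum hsum 0 (fun i _ => by positivity)
  · -- upper bound
    filter_upwards [eventually_gt_atTop (0:ℝ)] with y hy
    have hD : 0 < 4 * y * Real.exp (-(π ^ 2 * y / 4)) := by positivity
    have hqlt : Real.exp (-(2 * π ^ 2 * y)) < 1 := Real.exp_lt_one_iff.mpr (by nlinarith)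
    have hq0 : (0:ℝ) ≤ Real.exp (-(2 * π ^ 2 * y)) := Real.exp_nonneg _
    have hsumg : Summable (fun n : ℕ => 4 * (2 / π ^ 2 + y) * Real.exp (-(π ^ 2 * y / 4)) *
        Real.exp (-(2 * π ^ 2 * y)) ^ n) :=
      (summable_geometric_of_lt_one hq0 hqlt).mul_left _
    have hsum : Summable (fun n : ℕ => 4 * (2 / (π ^ 2 * (2 * (n:ℝ) + 1) ^ 2) + y) *
        Real.exp (-((π ^ 2 / 4) * (2 * (n:ℝ) + 1) ^ 2 * y))) :=
      Summable.of_nonneg_of_le (fun n => by positivity) (key y hy) hsumg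
    rw [div_le_iff₀ hD]
    calc (∑' n : ℕ, 4 * (2 / (π ^ 2 * (2 * (n:ℝ) + 1) ^ 2) + y) *
          Real.exp (-((π ^ 2 / 4) * (2 * (n:ℝ) + 1) ^ 2 * y)))
        ≤ ∑' n : ℕ, 4 * (2 / π ^ 2 + y) * Real.exp (-(π ^ 2 * y / 4)) *
          Real.exp (-(2 * π ^ 2 * y)) ^ n := Summable.tsum_le_tsum (key y hy) hsum hsumg
      _ = 4 * (2 / π ^ 2 + y) * Real.exp (-(π ^ 2 * y / 4)) *
          (1 - Real.exp (-(2 * π ^ 2 * y)))⁻¹ := by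
          rw [tsum_mul_left, tsum_geometric_of_lt_one hq0 hqlt]
      _ = (2 / π ^ 2 + y) / y * (1 - Real.exp (-(2 * π ^ 2 * y)))⁻¹ *
          (4 * y * Real.exp (-(π ^ 2 * y / 4))) := by
          have h1q : 1 - Real.exp (-(2 * π ^ 2 * y)) ≠ 0 := by linarith
          field_simp
end

section
/- Let γ ∈ (1,2] and suppose L : [0,∞) → (0,1] satisfies ∫_{L(λ)}^1 du/(u(1−u)^{(γ−1)/γ}) = γλ^{(γ−1)/γ} for all λ ≥ 0. Then L(λ)·exp(γλ^{(γ−1)/γ}) → e^{C_γ} as λ → ∞, where C_γ = ∫_0^1 u^{−1}((1−u)^{−(γ−1)/γ} − 1)du. -/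
/-!
Splitting off the pole `1/u` of the integrand gives
`∫_y^1 du/(u(1-u)^α) = -log y + G y` with `G y = ∫_y^1 u⁻¹((1-u)^(-α) - 1) du`, which is continuous
on `[0,1]` (the integrand is dominated by `(1-u)^(-α)`, integrable as `α < 1`) and `G 0 = C_γ`.
The hypothesis thus reads `log L(λ) + γλ^α = G (L λ)`. As `G` is bounded, `L λ → 0`, and then
`L(λ) e^{γλ^α} = e^{G (L λ)} → e^{G 0} = e^{C_γ}`.
-/

open Real MeasureTheory intervalIntegral Filter Set Topology

/-- `1/(u(1-u)^α)` with its pole `1/u` at `0` removed. -/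
noncomputable def regularPart (α u : ℝ) : ℝ := u⁻¹ * ((1 - u) ^ (-α) - 1)

section RegularPart

variable {α u : ℝ}

lemma regularPart_nonneg (hα : 0 ≤ α) (hu : u ∈ Ioo 0 1) : 0 ≤ regularPart α u :=
  mul_nonneg (inv_nonneg.2 hu.1.le) <| sub_nonneg.2 <|
    one_le_rpow_of_pos_of_le_one_of_nonpos (by linarith [hu.2]) (by linarith [hu.1]) (by linarith)

lemma regularPart_le (hα : α ≤ 1) (hu : u ∈ Ioo 0 1) : regularPart α u ≤ (1 - u) ^ (-α) := by
  have hu1 : 0 < 1 - u := by linarith [hu.2]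
  have hpow : (1 - u) * (1 - u) ^ (-α) ≤ 1 :=
    calc (1 - u) * (1 - u) ^ (-α) = (1 - u) ^ (1 + -α) := by rw [rpow_add hu1, rpow_one]
      _ ≤ 1 := rpow_le_one hu1.le (by linarith [hu.1]) (by linarith)
  rw [regularPart, inv_mul_le_iff₀ hu.1]
  linarith

lemma continuousOn_regularPart : ContinuousOn (regularPart α) (Ioo 0 1) := by
  refine (continuousOn_inv₀.mono fun u hu => hu.1.ne').mul
    (((continuousOn_const.sub continuousOn_id).rpow_const fun u hu => ?_).sub continuousOn_const)
  exact Or.inl (sub_pos.2 hu.2).ne'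

lemma integrableOn_regularPart (hα0 : 0 ≤ α) (hα1 : α < 1) :
    IntegrableOn (regularPart α) (Icc 0 1) := by
  have hdom : IntegrableOn (fun u : ℝ => (1 - u) ^ (-α)) (Ioc 0 1) := by
    have := (intervalIntegrable_rpow' (r := -α) (a := 0) (b := 1) (by linarith)).comp_sub_left 1
    simp only [sub_zero, sub_self] at this
    exact this.symm.1
  rw [integrableOn_Icc_iff_integrableOn_Ioo]
  refine (hdom.mono_set Ioo_subset_Ioc_self).mono'
    (continuousOn_regularPart.aestronglyMeasurable measurableSet_Ioo) ?_
  refine (ae_restrict_iff' measurableSet_Ioo).2 (ae_of_all _ fun u hu => ?_)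
  rw [norm_of_nonneg (regularPart_nonneg hα0 hu)]
  exact regularPart_le hα1.le hu

lemma continuousOn_integral_regularPart (hα0 : 0 ≤ α) (hα1 : α < 1) :
    ContinuousOn (fun y => ∫ u in y..1, regularPart α u) (Icc 0 1) := by
  have h := continuousOn_primitive_interval_left (μ := volume) (b := 1)
    (by rw [uIcc_of_le zero_le_one]; exact integrableOn_regularPart hα0 hα1)
  rwa [uIcc_of_le zero_le_one] at h

lemma integral_one_div_mul_rpow (hα0 : 0 ≤ α) (hα1 : α < 1) {y : ℝ} (hy : y ∈ Ioc 0 1) :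
    ∫ u in y..1, 1 / (u * (1 - u) ^ α) = -log y + ∫ u in y..1, regularPart α u := by
  have hzero : (0 : ℝ) ∉ uIcc y 1 := by
    rw [uIcc_of_le hy.2]; exact fun h => h.1.not_gt hy.1
  have hinv : IntervalIntegrable (fun u : ℝ => 1 / u) volume y 1 :=
    (continuousOn_const.div continuousOn_id fun u hu => ne_of_mem_of_not_mem hu hzero).intervalIntegrable
  have hreg : IntervalIntegrable (regularPart α) volume y 1 := by
    refine IntegrableOn.intervalIntegrable ?_
    rw [uIcc_of_le hy.2]
    exact (integrableOn_regularPart hα0 hα1).mono_set (Icc_subset_Icc hy.1.le le_rfl)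
  have hsplit : ∀ᵐ u, u ∈ uIoc y 1 → 1 / (u * (1 - u) ^ α) = 1 / u + regularPart α u := by
    filter_upwards [Measure.ae_ne volume 1] with u hu1 hu
    rw [uIoc_of_le hy.2] at hu
    have hu0 : 0 < u := hy.1.trans hu.1
    have hu1' : 0 < 1 - u := sub_pos.2 (lt_of_le_of_ne hu.2 hu1)
    rw [regularPart, rpow_neg hu1'.le]
    field_simp
    ring
  rw [integral_congr_ae hsplit, integral_add hinv hreg, integral_one_div hzero, one_div, log_inv]

end RegularPart

lemma tendsto_nhdsWithin_zero_of_log_add_eq {L φ g : ℝ → ℝ} (hφ : Tendsto φ atTop atTop)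
    (hg : BddAbove (g '' Ioc 0 1)) (hL : ∀ᶠ x in atTop, L x ∈ Ioc 0 1)
    (hLg : ∀ᶠ x in atTop, log (L x) + φ x = g (L x)) :
    Tendsto L atTop (𝓝[Ioc 0 1] 0) := by
  obtain ⟨B, hB⟩ := hg
  have hbound : Tendsto (fun x => exp (B - φ x)) atTop (𝓝 0) :=
    tendsto_exp_atBot.comp (tendsto_atBot_add_const_left _ B (tendsto_neg_atTop_atBot.comp hφ))
  refine tendsto_nhdsWithin_iff.2 ⟨tendsto_of_tendsto_of_tendsto_of_le_of_le' tendsto_const_nhds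
    hbound ?_ ?_, hL⟩
  · filter_upwards [hL] with x hx using hx.1.le
  · filter_upwards [hL, hLg] with x hx hx'
    rw [← exp_log hx.1]
    exact exp_le_exp.2 (by linarith [hB (mem_image_of_mem g hx)])

lemma tendsto_mul_exp_of_log_add_eq {L φ g : ℝ → ℝ} (hφ : Tendsto φ atTop atTop)
    (hg : ContinuousOn g (Icc 0 1)) (hL : ∀ᶠ x in atTop, L x ∈ Ioc 0 1)
    (hLg : ∀ᶠ x in atTop, log (L x) + φ x = g (L x)) :
    Tendsto (fun x => L x * exp (φ x)) atTop (𝓝 (exp (g 0))) := by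
  have hL0 := tendsto_nhdsWithin_zero_of_log_add_eq hφ
    ((isCompact_Icc.bddAbove_image hg).mono (image_mono Ioc_subset_Icc_self)) hL hLg
  have hgL : Tendsto (fun x => g (L x)) atTop (𝓝 (g 0)) :=
    ((hg 0 (left_mem_Icc.2 zero_le_one)).mono Ioc_subset_Icc_self).tendsto.comp hL0
  refine ((continuous_exp.tendsto _).comp hgL).congr' ?_
  filter_upwards [hL, hLg] with x hx hx'
  rw [Function.comp_apply, ← hx', exp_add, exp_log hx.1]

theorem stmt_16_general (γ : ℝ) (hγ : 1 < γ)
    (L : ℝ → ℝ) (hL : ∀ lam : ℝ, 0 ≤ lam → L lam ∈ Set.Ioc (0 : ℝ) 1)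
    (hid : ∀ lam : ℝ, 0 ≤ lam →
      (∫ u in (L lam)..1, 1 / (u * (1 - u) ^ ((γ - 1) / γ))) =
        γ * lam ^ ((γ - 1) / γ))
    (C : ℝ)
    (hC : C = ∫ u in Set.Ioo (0 : ℝ) 1, u⁻¹ * ((1 - u) ^ (-((γ - 1) / γ)) - 1)) :
    Tendsto (fun lam : ℝ => L lam * Real.exp (γ * lam ^ ((γ - 1) / γ)))
      atTop (nhds (Real.exp C)) := by
  have hγ0 : 0 < γ := by linarith
  have hα0 : 0 < (γ - 1) / γ := div_pos (by linarith) hγ0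
  have hα1 : (γ - 1) / γ < 1 := by rw [div_lt_one hγ0]; linarith
  have hC' : C = ∫ u in (0 : ℝ)..1, regularPart ((γ - 1) / γ) u := by
    rw [hC, integral_of_le zero_le_one, integral_Ioc_eq_integral_Ioo]
    rfl
  rw [hC']
  refine tendsto_mul_exp_of_log_add_eq (g := fun y => ∫ u in y..1, regularPart ((γ - 1) / γ) u)
    ((tendsto_rpow_atTop hα0).const_mul_atTop hγ0)
    (continuousOn_integral_regularPart hα0.le hα1) ?_ ?_
  · filter_upwards [eventually_ge_atTop 0] with lam hlam using hL lam hlam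
  · filter_upwards [eventually_ge_atTop 0] with lam hlam
    rw [← hid lam hlam, integral_one_div_mul_rpow hα0.le hα1 (hL lam hlam)]
    ring

theorem stmt_16 (γ : ℝ) (hγ : 1 < γ) (hγ2 : γ ≤ 2)
    (L : ℝ → ℝ) (hL : ∀ lam : ℝ, 0 ≤ lam → L lam ∈ Set.Ioc (0 : ℝ) 1)
    (hid : ∀ lam : ℝ, 0 ≤ lam →
      (∫ u in (L lam)..1, 1 / (u * (1 - u) ^ ((γ - 1) / γ))) =
        γ * lam ^ ((γ - 1) / γ))
    (C : ℝ)
    (hC : C = ∫ u in Set.Ioo (0 : ℝ) 1, u⁻¹ * ((1 - u) ^ (-((γ - 1) / γ)) - 1)) :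
    Tendsto (fun lam : ℝ => L lam * Real.exp (γ * lam ^ ((γ - 1) / γ)))
      atTop (nhds (Real.exp C)) :=
  stmt_16_general γ hγ L hL hid C hC
end
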